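/- For a circular scatterer of radius r₀ with material constants (S₁, S₂) and wavenumbers k₁, k₂, a frequency ω is a fictitious eigenvalue of the incoming Müller formulation if and only if ω̄ is a fictitious eigenvalue of the outgoing Müller formulation; equivalently, ω is a zero of −S₂H_n⁽²⁾(k₂(ω)r₀)·(d/dr)J_n(k₁(ω)r₀) + S₁·(d/dr)H_n⁽²⁾(k₂(ω)r₀)·J_n(k₁(ω)r₀) if and only if ω̄ is a zero of the same expression with H_n⁽¹⁾ in place of H_n⁽²⁾. -/
import Mathlib


open Complex

/-- Wavenumber `kᵥ(ω) = ω √(ρᵥ/Sᵥ)`. -/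
noncomputable def wavenum (ρ S : ℝ) (ω : ℂ) : ℂ := ω * (Real.sqrt (ρ / S) : ℂ)

/-- For a circular scatterer of radius `r₀`, `ω` is a zero of the incoming Müller
determinant (built with `Hₙ⁽²⁾ = Jₙ − iYₙ`) iff `ω̄` is a zero of the outgoing one
(built with `Hₙ⁽¹⁾ = Jₙ + iYₙ`), i.e. the fictitious eigenvalues of the incoming Müller
formulation are the conjugates of those of the outgoing one.  Here `J, Y` are the Bessel
functions of order `n` and `J', Y'` their derivatives, satisfying the conjugation
symmetries `conj (J z) = J z̄`, etc., and `(d/dr) f(k r)|_{r₀} = k f'(k r₀)`. -/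
theorem stmt7 (S₁ S₂ ρ₁ ρ₂ r₀ : ℝ) (hS₁ : 0 < S₁) (hS₂ : 0 < S₂)
    (hρ₁ : 0 < ρ₁) (hρ₂ : 0 < ρ₂) (hr₀ : 0 < r₀)
    (J J' Y Y' : ℂ → ℂ)
    (hJ : ∀ z, starRingEnd ℂ (J z) = J (starRingEnd ℂ z))
    (hJ' : ∀ z, starRingEnd ℂ (J' z) = J' (starRingEnd ℂ z))
    (hY : ∀ z, starRingEnd ℂ (Y z) = Y (starRingEnd ℂ z))
    (hY' : ∀ z, starRingEnd ℂ (Y' z) = Y' (starRingEnd ℂ z))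
    (ω : ℂ) :
    (-(S₂ : ℂ) * (J (wavenum ρ₂ S₂ ω * r₀) - I * Y (wavenum ρ₂ S₂ ω * r₀)) *
        (wavenum ρ₁ S₁ ω * J' (wavenum ρ₁ S₁ ω * r₀))
      + (S₁ : ℂ) * (wavenum ρ₂ S₂ ω *
          (J' (wavenum ρ₂ S₂ ω * r₀) - I * Y' (wavenum ρ₂ S₂ ω * r₀))) *
        J (wavenum ρ₁ S₁ ω * r₀) = 0)
    ↔
    (-(S₂ : ℂ) * (J (wavenum ρ₂ S₂ (starRingEnd ℂ ω) * r₀)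
          + I * Y (wavenum ρ₂ S₂ (starRingEnd ℂ ω) * r₀)) *
        (wavenum ρ₁ S₁ (starRingEnd ℂ ω) * J' (wavenum ρ₁ S₁ (starRingEnd ℂ ω) * r₀))
      + (S₁ : ℂ) * (wavenum ρ₂ S₂ (starRingEnd ℂ ω) *
          (J' (wavenum ρ₂ S₂ (starRingEnd ℂ ω) * r₀)
            + I * Y' (wavenum ρ₂ S₂ (starRingEnd ℂ ω) * r₀))) *
        J (wavenum ρ₁ S₁ (starRingEnd ℂ ω) * r₀) = 0) := by

  have hw : ∀ (ρ S : ℝ), starRingEnd ℂ (wavenum ρ S ω * r₀) =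
      wavenum ρ S (starRingEnd ℂ ω) * r₀ := by
    intro ρ S
    simp [wavenum, map_mul, Complex.conj_ofReal, mul_comm]
  have hw2 : ∀ (ρ S : ℝ), starRingEnd ℂ (wavenum ρ S (starRingEnd ℂ ω)) =
      wavenum ρ S ω := by
    intro ρ S
    simp [wavenum, map_mul, Complex.conj_ofReal]
  have hw' : ∀ (ρ S : ℝ), starRingEnd ℂ (wavenum ρ S ω) =
      wavenum ρ S (starRingEnd ℂ ω) := by
    intro ρ S
    simp [wavenum, map_mul, Complex.conj_ofReal]
  constructor
  · intro h
    have := congrArg (starRingEnd ℂ) h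
    simp only [map_add, map_mul, map_sub, map_neg, map_zero, Complex.conj_ofReal,
      Complex.conj_I, hw, hw', hJ, hJ', hY, hY'] at this
    linear_combination this
  · intro h
    have := congrArg (starRingEnd ℂ) h
    simp only [map_add, map_mul, map_sub, map_neg, map_zero, Complex.conj_ofReal,
      Complex.conj_I, hw, hw', hJ, hJ', hY, hY', hw2, Complex.conj_conj] at this
    linear_combination this
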